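/- arXiv:1501.00155 — 6 statements merged into one kernel-verified Lean document; each statement's English description precedes it below -/
import Mathlib

section
/- Locality: if φ is a PT₀-formula whose propositional variables are among p₁,…,pₙ, and X, Y are teams with X↾{p₁,…,pₙ} = Y↾{p₁,…,pₙ} (the restrictions of their valuations to these variables coincide as sets), then X satisfies φ if and only if Y satisfies φ. -/
/-- Valuations: assignments of truth values to propositional variables. -/
abbrev Val := ℕ → Bool
/-- Teams: sets of valuations. -/
abbrev Team := Set Val

/-- Formulas of propositional downward closed team logic PT₀. -/
inductive PTForm : Type
  | pos : ℕ → PTForm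
  | neg : ℕ → PTForm
  | bot : PTForm
  | dep : List ℕ → ℕ → PTForm
  | conj : PTForm → PTForm → PTForm
  | tensor : PTForm → PTForm → PTForm
  | idis : PTForm → PTForm → PTForm
  | impl : PTForm → PTForm → PTForm

/-- Team semantics for PT₀. -/
def PTForm.sat : Team → PTForm → Prop
  | X, .pos p => ∀ v ∈ X, v p = true
  | X, .neg p => ∀ v ∈ X, v p = false
  | X, .bot => X = ∅
  | X, .dep ps q => ∀ v ∈ X, ∀ w ∈ X, (∀ p ∈ ps, v p = w p) → v q = w q
  | X, .conj φ ψ => PTForm.sat X φ ∧ PTForm.sat X ψ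
  | X, .tensor φ ψ => ∃ Y Z : Team, Y ⊆ X ∧ Z ⊆ X ∧ X = Y ∪ Z ∧ PTForm.sat Y φ ∧ PTForm.sat Z ψ
  | X, .idis φ ψ => PTForm.sat X φ ∨ PTForm.sat X ψ
  | X, .impl φ ψ => ∀ Y : Team, Y ⊆ X → PTForm.sat Y φ → PTForm.sat Y ψ

/-- A PT₀-formula is a PD-formula if it uses only ∧ and ⊗ as connectives. -/
def PTForm.isPD : PTForm → Prop
  | .pos _ => True
  | .neg _ => True
  | .bot => True
  | .dep _ _ => True
  | .conj φ ψ => φ.isPD ∧ ψ.isPD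
  | .tensor φ ψ => φ.isPD ∧ ψ.isPD
  | .idis _ _ => False
  | .impl _ _ => False

/-- Contexts for PD with m placeholder atoms r₁,…,rₘ: placeholders occur only
    as atoms, never negated and never inside dependence atoms. -/
inductive PDCtx (m : ℕ) : Type
  | ph : Fin m → PDCtx m
  | pos : ℕ → PDCtx m
  | neg : ℕ → PDCtx m
  | bot : PDCtx m
  | dep : List ℕ → ℕ → PDCtx m
  | conj : PDCtx m → PDCtx m → PDCtx m
  | tensor : PDCtx m → PDCtx m → PDCtx m

/-- Uniform substitution of formulas for the placeholders of a context. -/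
def PDCtx.subst {m : ℕ} : PDCtx m → (Fin m → PTForm) → PTForm
  | .ph i, θ => θ i
  | .pos p, _ => .pos p
  | .neg p, _ => .neg p
  | .bot, _ => .bot
  | .dep ps q, _ => .dep ps q
  | .conj φ ψ, θ => .conj (φ.subst θ) (ψ.subst θ)
  | .tensor φ ψ, θ => .tensor (φ.subst θ) (ψ.subst θ)

/-- The subformula occurrence of a context at a given position (path in the
    syntax tree; `false` = left child, `true` = right child).  Positions `x`
    with `subAt φ x = some ψ` are exactly the nodes of the syntax tree of `φ`,
    labeled by `ψ`; `[]` is the root. -/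
def PDCtx.subAt {m : ℕ} : PDCtx m → List Bool → Option (PDCtx m)
  | φ, [] => some φ
  | .conj φ _, false :: x => φ.subAt x
  | .conj _ ψ, true :: x => ψ.subAt x
  | .tensor φ _, false :: x => φ.subAt x
  | .tensor _ ψ, true :: x => ψ.subAt x
  | _, _ :: _ => none

/-- `x` is a (proper) ancestor of `y` in the syntax tree. -/
def PDCtx.Anc (x y : List Bool) : Prop := x <+: y ∧ x ≠ y

/-- A context whose top connective is not ∧ or ⊗, i.e. a leaf label. -/
def PDCtx.isAtomic {m : ℕ} : PDCtx m → Prop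
  | .conj _ _ => False
  | .tensor _ _ => False
  | _ => True

/-- A truth function for the substitution instance `φ[θ₁,…,θₘ]`: it assigns to
    each node of the syntax tree of `φ` a team satisfying the corresponding
    substituted subformula, teams being propagated unchanged through
    conjunction nodes and split as unions through tensor nodes. -/
def IsTruthFun {m : ℕ} (φ : PDCtx m) (θ : Fin m → PTForm) (τ : List Bool → Team) : Prop :=
  (∀ x ψ, φ.subAt x = some ψ → PTForm.sat (τ x) (ψ.subst θ)) ∧
  (∀ x ψ χ, φ.subAt x = some (.conj ψ χ) →
      τ (x ++ [false]) = τ x ∧ τ (x ++ [true]) = τ x) ∧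
  (∀ x ψ χ, φ.subAt x = some (.tensor ψ χ) →
      τ x = τ (x ++ [false]) ∪ τ (x ++ [true]))

/-- A context is inconsistent if every substitution instance (by PD-formulas)
    is satisfied only by the empty team. -/
def CtxInconsistent {m : ℕ} (ψ : PDCtx m) : Prop :=
  ∀ θ : Fin m → PTForm, (∀ i, (θ i).isPD) → ∀ X : Team, PTForm.sat X (ψ.subst θ) → X = ∅

/-- The set of propositional variables occurring in a PT₀-formula. -/
def PTForm.vars : PTForm → Set ℕ
  | .pos p => {p}
  | .neg p => {p}
  | .bot => ∅
  | .dep ps q => {x | x ∈ ps} ∪ {q}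
  | .conj φ ψ => φ.vars ∪ ψ.vars
  | .tensor φ ψ => φ.vars ∪ ψ.vars
  | .idis φ ψ => φ.vars ∪ ψ.vars
  | .impl φ ψ => φ.vars ∪ ψ.vars

/-- Restriction of a team to a set of variables. -/
def restrictTeam (N : Finset ℕ) (X : Team) : Team :=
  (fun v : Val => fun p => if p ∈ N then v p else false) '' X

namespace LocalityAux

def r (N : Finset ℕ) (v : Val) : Val := fun p => if p ∈ N then v p else false

lemma r_eq {N : Finset ℕ} {v w : Val} (h : r N v = r N w) {p : ℕ} (hp : p ∈ N) :
    v p = w p := by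
  have := congrFun h p
  simpa [r, hp] using this

lemma mem_restrict {N : Finset ℕ} {X : Team} {v : Val} (hv : v ∈ X) :
    r N v ∈ restrictTeam N X := ⟨v, hv, rfl⟩

lemma exists_of_eq {N : Finset ℕ} {X Y : Team}
    (h : restrictTeam N X = restrictTeam N Y) {v} (hv : v ∈ X) :
    ∃ w ∈ Y, r N w = r N v := by
  have : r N v ∈ restrictTeam N Y := h ▸ mem_restrict hv
  obtain ⟨w, hw, hwe⟩ := this
  exact ⟨w, hw, hwe⟩

lemma loc_mp (φ : PTForm) (N : Finset ℕ) (hv : φ.vars ⊆ ↑N) :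
    ∀ X Y : Team, restrictTeam N X = restrictTeam N Y →
      PTForm.sat X φ → PTForm.sat Y φ := by
  induction φ with
  | pos p =>
    intro X Y h hs v hvY
    obtain ⟨w, hwX, hw⟩ := exists_of_eq h.symm hvY
    have hp : p ∈ N := hv (by simp [PTForm.vars])
    rw [← r_eq hw hp]
    exact hs w hwX
  | neg p =>
    intro X Y h hs v hvY
    obtain ⟨w, hwX, hw⟩ := exists_of_eq h.symm hvY
    have hp : p ∈ N := hv (by simp [PTForm.vars])
    rw [← r_eq hw hp]
    exact hs w hwX
  | bot =>
    intro X Y h hs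
    ext v
    simp only [Set.mem_empty_iff_false, iff_false]
    intro hvY
    obtain ⟨w, hwX, _⟩ := exists_of_eq h.symm hvY
    rw [hs] at hwX
    exact hwX
  | dep ps q =>
    intro X Y h hs v hvY w hwY hagree
    obtain ⟨v', hv'X, hv'⟩ := exists_of_eq h.symm hvY
    obtain ⟨w', hw'X, hw'⟩ := exists_of_eq h.symm hwY
    have hq : q ∈ N := hv (by simp [PTForm.vars])
    have hagree' : ∀ p ∈ ps, v' p = w' p := by
      intro p hp
      have hpN : p ∈ N := hv (by simp [PTForm.vars, hp])
      rw [r_eq hv' hpN, r_eq hw' hpN]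
      exact hagree p hp
    have := hs v' hv'X w' hw'X hagree'
    rw [← r_eq hv' hq, ← r_eq hw' hq]
    exact this
  | conj φ ψ ih1 ih2 =>
    intro X Y h hs
    have h1 : φ.vars ⊆ ↑N := fun x hx => hv (Or.inl hx)
    have h2 : ψ.vars ⊆ ↑N := fun x hx => hv (Or.inr hx)
    exact ⟨ih1 h1 X Y h hs.1, ih2 h2 X Y h hs.2⟩
  | tensor φ ψ ih1 ih2 =>
    intro X Y h hs
    obtain ⟨Y₁, Y₂, hY₁, hY₂, hXu, hs1, hs2⟩ := hs
    have h1 : φ.vars ⊆ ↑N := fun x hx => hv (Or.inl hx)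
    have h2 : ψ.vars ⊆ ↑N := fun x hx => hv (Or.inr hx)
    refine ⟨{v ∈ Y | r N v ∈ restrictTeam N Y₁},
            {v ∈ Y | r N v ∈ restrictTeam N Y₂},
            fun v hv => hv.1, fun v hv => hv.1, ?_, ?_, ?_⟩
    · ext v
      constructor
      · intro hvY
        obtain ⟨u, huX, hu⟩ := exists_of_eq h.symm hvY
        rcases hXu ▸ huX with hu1 | hu2
        · exact Or.inl ⟨hvY, hu ▸ mem_restrict hu1⟩
        · exact Or.inr ⟨hvY, hu ▸ mem_restrict hu2⟩
      · rintro (⟨hvY, _⟩ | ⟨hvY, _⟩) <;> exact hvY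
    · refine ih1 h1 Y₁ _ ?_ hs1
      apply Set.Subset.antisymm
      · rintro w ⟨u, huY₁, rfl⟩
        have : r N u ∈ restrictTeam N Y := h ▸ mem_restrict (hY₁ huY₁)
        obtain ⟨v, hvY, hveq⟩ := this
        have hveq' : r N v = r N u := hveq
        exact ⟨v, ⟨hvY, hveq' ▸ mem_restrict huY₁⟩, hveq⟩
      · rintro w ⟨v, ⟨_, hv1⟩, rfl⟩
        exact hv1
    · refine ih2 h2 Y₂ _ ?_ hs2
      apply Set.Subset.antisymm
      · rintro w ⟨u, huY₂, rfl⟩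
        have : r N u ∈ restrictTeam N Y := h ▸ mem_restrict (hY₂ huY₂)
        obtain ⟨v, hvY, hveq⟩ := this
        have hveq' : r N v = r N u := hveq
        exact ⟨v, ⟨hvY, hveq' ▸ mem_restrict huY₂⟩, hveq⟩
      · rintro w ⟨v, ⟨_, hv1⟩, rfl⟩
        exact hv1
  | idis φ ψ ih1 ih2 =>
    intro X Y h hs
    have h1 : φ.vars ⊆ ↑N := fun x hx => hv (Or.inl hx)
    have h2 : ψ.vars ⊆ ↑N := fun x hx => hv (Or.inr hx)
    rcases hs with hs | hs
    · exact Or.inl (ih1 h1 X Y h hs)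
    · exact Or.inr (ih2 h2 X Y h hs)
  | impl φ ψ ih1 ih2 =>
    intro X Y h hs Z hZY hZφ
    have h1 : φ.vars ⊆ ↑N := fun x hx => hv (Or.inl hx)
    have h2 : ψ.vars ⊆ ↑N := fun x hx => hv (Or.inr hx)
    set Z' : Team := {v ∈ X | r N v ∈ restrictTeam N Z} with hZ'def
    have hZ'X : Z' ⊆ X := fun v hv => hv.1
    have hre : restrictTeam N Z' = restrictTeam N Z := by
      apply Set.Subset.antisymm
      · rintro w ⟨v, ⟨_, hv1⟩, rfl⟩
        exact hv1
      · rintro w ⟨u, huZ, rfl⟩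
        have : r N u ∈ restrictTeam N X := h.symm ▸ mem_restrict (hZY huZ)
        obtain ⟨v, hvX, hveq⟩ := this
        have hveq' : r N v = r N u := hveq
        exact ⟨v, ⟨hvX, hveq' ▸ mem_restrict huZ⟩, hveq⟩
    have hZ'φ : PTForm.sat Z' φ := ih1 h1 Z Z' hre.symm hZφ
    exact ih2 h2 Z' Z hre (hs Z' hZ'X hZ'φ)

end LocalityAux

/-- Locality: if the variables of φ are among N and X, Y have the same
    restriction to N, then X ⊨ φ iff Y ⊨ φ. -/
theorem locality (φ : PTForm) (N : Finset ℕ) (hv : φ.vars ⊆ ↑N)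
    (X Y : Team) (h : restrictTeam N X = restrictTeam N Y) :
    PTForm.sat X φ ↔ PTForm.sat Y φ :=
  ⟨LocalityAux.loc_mp φ N hv X Y h, LocalityAux.loc_mp φ N hv Y X h.symm⟩
end

section
/- Intuitionistic implication is not uniformly definable in propositional dependence logic PD: there is no context φ[r₁,r₂] for PD such that for all PD-formulas θ₁, θ₂, the formula φ[θ₁,θ₂] is semantically equivalent to θ₁ → θ₂ (where → is the intuitionistic implication of team semantics). -/

lemma PDCtx.subst_mono {m : ℕ} (φ : PDCtx m) (θ θ' : Fin m → PTForm)
    (h : ∀ i (X : Team), PTForm.sat X (θ i) → PTForm.sat X (θ' i)) :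
    ∀ X : Team, PTForm.sat X (φ.subst θ) → PTForm.sat X (φ.subst θ') := by
  induction φ with
  | ph i => exact h i
  | pos p => exact fun X hX => hX
  | neg p => exact fun X hX => hX
  | bot => exact fun X hX => hX
  | dep ps q => exact fun X hX => hX
  | conj φ ψ ihφ ihψ => exact fun X ⟨h1, h2⟩ => ⟨ihφ X h1, ihψ X h2⟩
  | tensor φ ψ ihφ ihψ =>
    rintro X ⟨Y, Z, hY, hZ, hXYZ, h1, h2⟩
    exact ⟨Y, Z, hY, hZ, hXYZ, ihφ Y h1, ihψ Z h2⟩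

/-- Intuitionistic implication is not uniformly definable in PD: no PD context
    φ[r₁,r₂] satisfies φ[θ₁,θ₂] ≡ θ₁ → θ₂ for all PD-formulas θ₁, θ₂. -/
theorem impl_not_uniformly_definable :
    ¬ ∃ φ : PDCtx 2, ∀ θ₁ θ₂ : PTForm, θ₁.isPD → θ₂.isPD →
      ∀ X : Team, PTForm.sat X (φ.subst ![θ₁, θ₂]) ↔ PTForm.sat X (.impl θ₁ θ₂) := by
  rintro ⟨φ, hφ⟩
  -- ⊤ := p₀ ⊗ ¬p₀, satisfied by every team
  set top : PTForm := .tensor (.pos 0) (.neg 0) with htop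
  have htopsat : ∀ X : Team, PTForm.sat X top := by
    intro X
    refine ⟨{v ∈ X | v 0 = true}, {v ∈ X | v 0 = false}, fun v hv => hv.1,
      fun v hv => hv.1, ?_, fun v hv => hv.2, fun v hv => hv.2⟩
    ext v
    constructor
    · intro hv
      cases hb : v 0 with
      | true => exact Or.inl ⟨hv, hb⟩
      | false => exact Or.inr ⟨hv, hb⟩
    · rintro (⟨hv, _⟩ | ⟨hv, _⟩) <;> exact hv
  -- univ satisfies φ[⊥,⊥] since it satisfies ⊥ → ⊥
  have h1 : PTForm.sat Set.univ (φ.subst ![PTForm.bot, PTForm.bot]) := by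
    rw [hφ PTForm.bot PTForm.bot trivial trivial]
    intro Y _ hY
    exact hY
  -- monotonicity: ⊥ entails ⊤
  have h2 : PTForm.sat Set.univ (φ.subst ![top, PTForm.bot]) := by
    refine PDCtx.subst_mono φ _ _ ?_ Set.univ h1
    intro i X hX
    fin_cases i
    · exact htopsat X
    · exact hX
  -- hence univ satisfies ⊤ → ⊥, contradiction
  have h3 : PTForm.sat Set.univ (PTForm.impl top PTForm.bot) := by
    have hpd : top.isPD := ⟨trivial, trivial⟩
    exact (hφ top PTForm.bot hpd trivial Set.univ).mp h2
  have h4 := h3 Set.univ (subset_refl _) (htopsat Set.univ)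
  exact Set.notMem_empty (fun _ : ℕ => true) (h4 ▸ Set.mem_univ (fun _ : ℕ => true))
end

section
/- If ⋇ is an m-ary team-semantics connective such that for every 1 ≤ i ≤ m there exist PD-formulas θ₁,…,θₘ with ⋇(θ₁,…,θₘ) not entailing θᵢ, and φ[r₁,…,rₘ] is a PD context uniformly defining ⋇, then in the syntax tree of φ every leaf node labeled with some placeholder rᵢ has an ancestor node labeled with a tensor formula ψ⊗χ. -/
/-- If no proper ancestor of position `x` is a tensor node, then satisfaction
    propagates from the root to the subformula at `x` (conjunctions only). -/
lemma no_tensor_entails : ∀ (x : List Bool) {m : ℕ} (φ ψ : PDCtx m),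
    φ.subAt x = some ψ →
    (∀ y, y <+: x → y ≠ x → ∀ a b : PDCtx m, φ.subAt y ≠ some (.tensor a b)) →
    ∀ (X : Team) (θ : Fin m → PTForm),
      PTForm.sat X (φ.subst θ) → PTForm.sat X (ψ.subst θ)
  | [], m, φ, ψ, h, _, X, θ, hs => by
      simp [PDCtx.subAt] at h; subst h; exact hs
  | b :: x, m, φ, ψ, h, hnt, X, θ, hs => by
      cases φ with
      | conj φ₁ φ₂ =>
        have hnt' : ∀ y, y <+: x → y ≠ x → ∀ a c : PDCtx m,
            (if b then φ₂ else φ₁).subAt y ≠ some (.tensor a c) := by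
          intro y hy hne a d hT
          refine hnt (b :: y) ⟨hy.choose, ?_⟩ (by simpa using hne) a d ?_
          · simp [hy.choose_spec]
          · cases b <;> simpa [PDCtx.subAt] using hT
        cases b with
        | false => exact no_tensor_entails x φ₁ ψ h (by simpa using hnt') X θ hs.1
        | true => exact no_tensor_entails x φ₂ ψ h (by simpa using hnt') X θ hs.2
      | tensor φ₁ φ₂ =>
        exact absurd rfl (hnt [] ⟨b :: x, rfl⟩ (by simp) φ₁ φ₂)
      | ph j => cases b <;> simp [PDCtx.subAt] at h
      | pos p => cases b <;> simp [PDCtx.subAt] at h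
      | neg p => cases b <;> simp [PDCtx.subAt] at h
      | bot => cases b <;> simp [PDCtx.subAt] at h
      | dep ps q => cases b <;> simp [PDCtx.subAt] at h

/-- If ⋇ is an m-ary team-semantics connective such that for each i some
    instance ⋇(θ₁,…,θₘ) does not entail θᵢ, and the PD context φ uniformly
    defines ⋇, then every leaf of the syntax tree of φ labeled with a
    placeholder has a tensor-labeled ancestor. -/
theorem placeholder_leaf_has_tensor_ancestor {m : ℕ}
    (C : (Fin m → (Team → Prop)) → (Team → Prop)) (φ : PDCtx m)
    (hdef : ∀ θ : Fin m → PTForm, (∀ i, (θ i).isPD) →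
        ∀ X : Team, PTForm.sat X (φ.subst θ) ↔ C (fun i Y => PTForm.sat Y (θ i)) X)
    (hnon : ∀ i : Fin m, ∃ θ : Fin m → PTForm, (∀ j, (θ j).isPD) ∧
        ∃ X : Team, C (fun j Y => PTForm.sat Y (θ j)) X ∧ ¬ PTForm.sat X (θ i)) :
    ∀ x (i : Fin m), φ.subAt x = some (.ph i) →
      ∃ y, PDCtx.Anc y x ∧ ∃ ψ χ : PDCtx m, φ.subAt y = some (.tensor ψ χ) := by
  intro x i hx
  by_contra hcon
  have hnt : ∀ y, y <+: x → y ≠ x → ∀ a b : PDCtx m,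
      φ.subAt y ≠ some (.tensor a b) := by
    intro y hy hne a b hT
    exact hcon ⟨y, ⟨hy, hne⟩, a, b, hT⟩
  obtain ⟨θ, hPD, X, hC, hni⟩ := hnon i
  have hsat : PTForm.sat X (φ.subst θ) := (hdef θ hPD X).2 hC
  have := no_tensor_entails x φ (.ph i) hx hnt X θ hsat
  exact hni this
end

section
/- Intuitionistic disjunction is not uniformly definable in propositional dependence logic PD: there is no context φ[r₁,r₂] for PD such that for all PD-formulas θ₁, θ₂, φ[θ₁,θ₂] is semantically equivalent to θ₁ ∨ θ₂, where X ⊨ θ₁∨θ₂ iff X ⊨ θ₁ or X ⊨ θ₂. -/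
/-!
Write `⊤` for `=(p₀, p₀)` and `Θ_S` for the PD formula satisfied exactly by the teams that
miss some pattern of truth values on the finite set `S` of variables. By induction on a
context `ψ`, either `ψ[⊥, ⊤]` or `ψ[⊤, ⊥]` is inconsistent, or for `(α, β) = (⊤, ⊥), (⊥, ⊤)`
and all large `S` every team satisfying `ψ[α, β]` also satisfies `ψ[Θ_S, Θ_S]`.
On a team missing a pattern this replacement is free, as all its subteams satisfy `Θ_S`.
For `ψ₁ ⊗ ψ₂` on a team realising every pattern, one of the two parts realises every
pattern too, so by locality the whole team satisfies that side, say `ψ₁[α, β]`. If `ψ₁`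
upgrades, the other part can be taken empty; if instead `ψ₁[β, α]` is inconsistent, then
`ψ₂[β, α]` is not, and the team splits into the members agreeing on `S` with a model of
`ψ₂[β, α]` and the rest, both of which miss a pattern.

If `φ[θ₁, θ₂] ≡ θ₁ ∨ θ₂`, the full team satisfies both `φ[⊤, ⊥]` and `φ[⊥, ⊤]`, so `φ` is in
the third case and the full team would satisfy `Θ_S ∨ Θ_S`, which it does not.
-/

open Filter Set

theorem Finset.restrict_eq_restrict_iff {ι : Type*} {π : ι → Type*} {s : Finset ι}
    {f g : (i : ι) → π i} : s.restrict f = s.restrict g ↔ ∀ i ∈ s, f i = g i :=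
  funext_iff.trans Subtype.forall

def FullOn (S : Finset ℕ) (X : Team) : Prop := S.restrict '' X = univ

theorem FullOn.mono {S : Finset ℕ} {X Y : Team} (hY : FullOn S Y) (hYX : Y ⊆ X) : FullOn S X :=
  eq_univ_of_univ_subset (hY ▸ image_mono hYX)

theorem FullOn.nonempty {S : Finset ℕ} {X : Team} (hX : FullOn S X) : X.Nonempty :=
  image_nonempty.1 (hX ▸ univ_nonempty)

theorem fullOn_univ (S : Finset ℕ) : FullOn S univ :=
  image_univ_of_surjective fun b => ⟨fun q => if h : q ∈ S then b ⟨q, h⟩ else false, by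
    funext q; simp [Finset.restrict]⟩

namespace PTForm

def top : PTForm := .dep [0] 0

theorem isPD_top : top.isPD := trivial

theorem sat_top (X : Team) : sat X top := fun _ _ _ _ h => h 0 (List.mem_singleton_self 0)

def vars_s13 : PTForm → Finset ℕ
  | .pos p | .neg p => {p}
  | .bot => ∅
  | .dep ps q => insert q ps.toFinset
  | .conj φ ψ | .tensor φ ψ | .idis φ ψ | .impl φ ψ => φ.vars_s13 ∪ ψ.vars_s13

theorem sat_tensor_iff {X : Team} {φ ψ : PTForm} :
    sat X (.tensor φ ψ) ↔ ∃ Y Z : Team, X = Y ∪ Z ∧ sat Y φ ∧ sat Z ψ := by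
  refine ⟨fun ⟨Y, Z, _, _, hX, hY, hZ⟩ => ⟨Y, Z, hX, hY, hZ⟩, ?_⟩
  rintro ⟨Y, Z, rfl, hY, hZ⟩
  exact ⟨Y, Z, subset_union_left, subset_union_right, rfl, hY, hZ⟩

theorem sat_tensor_comm {X : Team} {φ ψ : PTForm} (h : sat X (.tensor φ ψ)) :
    sat X (.tensor ψ φ) := by
  obtain ⟨Y, Z, rfl, hY, hZ⟩ := sat_tensor_iff.1 h
  exact sat_tensor_iff.2 ⟨Z, Y, union_comm Y Z, hZ, hY⟩

theorem sat_empty : ∀ {φ : PTForm}, φ.isPD → sat ∅ φ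
  | .pos _, _ | .neg _, _ | .dep _ _, _ => by simp [sat]
  | .bot, _ => rfl
  | .conj _ _, hφ => ⟨sat_empty hφ.1, sat_empty hφ.2⟩
  | .tensor _ _, hφ =>
    sat_tensor_iff.2 ⟨∅, ∅, (union_empty ∅).symm, sat_empty hφ.1, sat_empty hφ.2⟩

theorem sat_of_subset : ∀ {φ : PTForm}, φ.isPD → ∀ {X Y : Team}, Y ⊆ X → sat X φ → sat Y φ
  | .pos _, _, _, _, hYX, h | .neg _, _, _, _, hYX, h => fun v hv => h v (hYX hv)
  | .bot, _, _, _, hYX, h => subset_empty_iff.1 (h ▸ hYX)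
  | .dep _ _, _, _, _, hYX, h => fun v hv w hw => h v (hYX hv) w (hYX hw)
  | .conj _ _, hφ, _, _, hYX, h => ⟨sat_of_subset hφ.1 hYX h.1, sat_of_subset hφ.2 hYX h.2⟩
  | .tensor _ _, hφ, X, Y, hYX, h => by
    obtain ⟨A, B, rfl, hA, hB⟩ := sat_tensor_iff.1 h
    refine sat_tensor_iff.2 ⟨A ∩ Y, B ∩ Y, ?_, sat_of_subset hφ.1 inter_subset_left hA,
      sat_of_subset hφ.2 inter_subset_left hB⟩
    rw [← union_inter_distrib_right, inter_eq_right.2 hYX]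

theorem exists_restrict_eq_of_image_eq {V : Finset ℕ} {X Y : Team}
    (hXY : V.restrict '' X = V.restrict '' Y) {v : Val} (hv : v ∈ Y) :
    ∃ x ∈ X, ∀ q ∈ V, x q = v q := by
  obtain ⟨x, hx, hxv⟩ : V.restrict v ∈ V.restrict '' X := hXY ▸ mem_image_of_mem _ hv
  exact ⟨x, hx, fun q hq => congrFun hxv ⟨q, hq⟩⟩

theorem sat_of_restrict_image_eq : ∀ {φ : PTForm}, φ.isPD → ∀ {V : Finset ℕ}, φ.vars_s13 ⊆ V →
    ∀ {X Y : Team}, V.restrict '' X = V.restrict '' Y → sat X φ → sat Y φ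
  | .pos p, _, _, hV, _, _, hXY, h | .neg p, _, _, hV, _, _, hXY, h => fun v hv => by
    obtain ⟨x, hx, hxv⟩ := exists_restrict_eq_of_image_eq hXY hv
    rw [← hxv p (hV (by simp [vars_s13]))]
    exact h x hx
  | .bot, _, _, _, X, _, hXY, h => by
    rwa [show X = ∅ from h, image_empty, eq_comm, image_eq_empty] at hXY
  | .dep ps q, _, V, hV, _, _, hXY, h => fun v hv w hw hvw => by
    obtain ⟨x, hx, hxv⟩ := exists_restrict_eq_of_image_eq hXY hv
    obtain ⟨y, hy, hyw⟩ := exists_restrict_eq_of_image_eq hXY hw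
    have hps : ∀ p ∈ ps, p ∈ V := fun p hp => hV (by simp [vars_s13, hp])
    rw [← hxv q (hV (by simp [vars_s13])), ← hyw q (hV (by simp [vars_s13]))]
    exact h x hx y hy fun p hp => by rw [hxv p (hps p hp), hyw p (hps p hp), hvw p hp]
  | .conj _ _, hφ, _, hV, _, _, hXY, h =>
    ⟨sat_of_restrict_image_eq hφ.1 (Finset.subset_union_left.trans hV) hXY h.1,
      sat_of_restrict_image_eq hφ.2 (Finset.subset_union_right.trans hV) hXY h.2⟩
  | .tensor _ _, hφ, V, hV, X, Y, hXY, h => by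
    obtain ⟨A, B, rfl, hA, hB⟩ := sat_tensor_iff.1 h
    have himage : ∀ C ⊆ A ∪ B,
        V.restrict '' C = V.restrict '' (Y ∩ V.restrict ⁻¹' (V.restrict '' C)) := fun C hC => by
      rw [image_inter_preimage, ← hXY, inter_eq_right.2 (image_mono hC)]
    refine sat_tensor_iff.2 ⟨_, _, ?_,
      sat_of_restrict_image_eq hφ.1 (Finset.subset_union_left.trans hV)
        (himage A subset_union_left) hA,
      sat_of_restrict_image_eq hφ.2 (Finset.subset_union_right.trans hV)
        (himage B subset_union_right) hB⟩
    rw [← inter_union_distrib_left, ← preimage_union, ← image_union, hXY,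
      inter_eq_left.2 (subset_preimage_image _ _)]

theorem sat_of_fullOn_of_subset {φ : PTForm} (hφ : φ.isPD) {S : Finset ℕ}
    (hS : φ.vars_s13 ⊆ S) {X Y : Team} (hYX : Y ⊆ X) (hY : FullOn S Y) (h : sat Y φ) : sat X φ :=
  sat_of_restrict_image_eq hφ hS (hY.trans (hY.mono hYX).symm) h

def allConst : List ℕ → PTForm
  | [] => top
  | q :: L => .conj (.dep [] q) (allConst L)

theorem isPD_allConst : ∀ L : List ℕ, (allConst L).isPD
  | [] => isPD_top
  | _ :: L => ⟨trivial, isPD_allConst L⟩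

theorem sat_allConst_iff {X : Team} :
    ∀ {L : List ℕ}, sat X (allConst L) ↔ ∀ v ∈ X, ∀ w ∈ X, ∀ q ∈ L, v q = w q
  | [] => by simp [allConst, sat_top]
  | q :: L => by
    simp only [allConst, sat, sat_allConst_iff, List.mem_cons, List.not_mem_nil,
      forall_eq_or_imp, IsEmpty.forall_iff, implies_true, forall_const]
    grind

def tensorPow (χ : PTForm) : ℕ → PTForm
  | 0 => .bot
  | n + 1 => .tensor χ (tensorPow χ n)

theorem isPD_tensorPow {χ : PTForm} (hχ : χ.isPD) : ∀ n, (tensorPow χ n).isPD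
  | 0 => trivial
  | n + 1 => ⟨hχ, isPD_tensorPow hχ n⟩

theorem sat_tensorPow_iff {χ : PTForm} {X : Team} :
    ∀ {n : ℕ}, sat X (tensorPow χ n) ↔ ∃ f : Fin n → Team, X = ⋃ i, f i ∧ ∀ i, sat (f i) χ
  | 0 => by simp [tensorPow, sat]
  | n + 1 => by
    simp only [tensorPow, sat_tensor_iff, sat_tensorPow_iff, Fin.exists_fin_succ_pi,
      iUnion_cons, Fin.forall_fin_succ, Fin.cons_zero, Fin.cons_succ]
    grind

/-- `Θ_S`, satisfied exactly by the teams missing some pattern on `S`: such a team is a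
union of `2 ^ |S| - 1` teams that are constant on `S`. -/
noncomputable def theta (S : Finset ℕ) : PTForm :=
  tensorPow (allConst S.toList) (2 ^ S.card - 1)

theorem isPD_theta (S : Finset ℕ) : (theta S).isPD := isPD_tensorPow (isPD_allConst _) _

theorem sat_theta_iff {S : Finset ℕ} {X : Team} : sat X (theta S) ↔ ¬ FullOn S X := by
  have hcard : Fintype.card (S → Bool) = 2 ^ S.card := by simp
  simp only [theta, sat_tensorPow_iff, sat_allConst_iff, Finset.mem_toList,
    ← Finset.restrict_eq_restrict_iff]
  constructor
  · rintro ⟨f, rfl, hf⟩ hfull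
    have hpattern : ∀ i, ∃ b, ∀ v ∈ f i, S.restrict v = b := fun i =>
      (f i).eq_empty_or_nonempty.elim (fun h => ⟨fun _ => false, by simp [h]⟩)
        fun ⟨v, hv⟩ => ⟨S.restrict v, fun w hw => hf i w hw v hv⟩
    choose b hb using hpattern
    have hsurj : Function.Surjective b := fun c => by
      obtain ⟨v, hv, rfl⟩ : c ∈ S.restrict '' ⋃ i, f i := hfull ▸ mem_univ c
      obtain ⟨i, hi⟩ := mem_iUnion.1 hv
      exact ⟨i, (hb i v hi).symm⟩
    have := Fintype.card_le_of_surjective b hsurj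
    rw [hcard, Fintype.card_fin] at this
    have := Nat.one_le_two_pow (n := S.card)
    omega
  · intro hX
    obtain ⟨c, hc⟩ := (ne_univ_iff_exists_notMem _).1 hX
    let e : Fin (2 ^ S.card - 1) ≃ {b // b ≠ c} :=
      (Fintype.equivFinOfCardEq (by simp [Fintype.card_subtype_compl, hcard])).symm
    refine ⟨fun i => {v ∈ X | S.restrict v = e i}, ?_, fun i v hv w hw => hv.2.trans hw.2.symm⟩
    ext v
    simp only [mem_iUnion, mem_ofPred_eq]
    exact ⟨fun hv => ⟨e.symm ⟨S.restrict v, fun h => hc (h ▸ mem_image_of_mem _ hv)⟩, hv,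
      by simp⟩, fun ⟨_, hv, _⟩ => hv⟩

end PTForm

namespace PDCtx

open PTForm

theorem isPD_subst {m : ℕ} {θ : Fin m → PTForm} (hθ : ∀ i, (θ i).isPD) :
    ∀ ψ : PDCtx m, (ψ.subst θ).isPD
  | .ph i => hθ i
  | .pos _ | .neg _ | .bot | .dep _ _ => trivial
  | .conj ψ χ | .tensor ψ χ => ⟨isPD_subst hθ ψ, isPD_subst hθ χ⟩

theorem sat_subst_mono {m : ℕ} {θ θ' : Fin m → PTForm} :
    ∀ (ψ : PDCtx m) {X : Team}, (∀ i, ∀ Y ⊆ X, sat Y (θ i) → sat Y (θ' i)) →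
      sat X (ψ.subst θ) → sat X (ψ.subst θ')
  | .ph i, X, h, hX => h i X subset_rfl hX
  | .pos _, _, _, hX | .neg _, _, _, hX | .bot, _, _, hX | .dep _ _, _, _, hX => hX
  | .conj ψ χ, _, h, hX => ⟨sat_subst_mono ψ h hX.1, sat_subst_mono χ h hX.2⟩
  | .tensor ψ χ, _, h, hX => by
    obtain ⟨Y, Z, rfl, hY, hZ⟩ := sat_tensor_iff.1 hX
    exact sat_tensor_iff.2 ⟨Y, Z, rfl,
      sat_subst_mono ψ (fun i W hW => h i W (hW.trans subset_union_left)) hY,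
      sat_subst_mono χ (fun i W hW => h i W (hW.trans subset_union_right)) hZ⟩

theorem sat_subst_theta_of_not_fullOn {m : ℕ} (ψ : PDCtx m) {θ : Fin m → PTForm}
    {S : Finset ℕ} {X : Team} (hX : ¬ FullOn S X) (h : sat X (ψ.subst θ)) :
    sat X (ψ.subst fun _ => theta S) :=
  sat_subst_mono ψ (fun _ _ hYX _ => sat_theta_iff.2 fun hY => hX (hY.mono hYX)) h

def Inconsistent (ψ : PDCtx 2) (α β : PTForm) : Prop :=
  ∀ X : Team, sat X (ψ.subst ![α, β]) → X = ∅

def Upgrades (ψ : PDCtx 2) (α β : PTForm) : Prop :=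
  ∀ᶠ S in atTop, ∀ X : Team, sat X (ψ.subst ![α, β]) → sat X (ψ.subst fun _ => theta S)

theorem Upgrades.conj {ψ₁ ψ₂ : PDCtx 2} {α β : PTForm} (h₁ : Upgrades ψ₁ α β)
    (h₂ : Upgrades ψ₂ α β) : Upgrades (ψ₁.conj ψ₂) α β :=
  (h₁.and h₂).mono fun _ h X hX => ⟨h.1 X hX.1, h.2 X hX.2⟩

theorem Inconsistent.tensor {ψ₁ ψ₂ : PDCtx 2} {α β : PTForm}
    (h₁ : Inconsistent ψ₁ α β) (h₂ : Inconsistent ψ₂ α β) : Inconsistent (ψ₁.tensor ψ₂) α β :=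
  fun X hX => by
    obtain ⟨Y, Z, rfl, hY, hZ⟩ := sat_tensor_iff.1 hX
    rw [h₁ Y hY, h₂ Z hZ, union_empty]

end PDCtx

open PTForm PDCtx

theorem exists_subteam_sat_of_fullOn {S : Finset ℕ} {X : Team} (hX : FullOn S X) {q : ℕ}
    (hq : q ∈ S) {χ : PTForm} (hχ : χ.isPD) (hvars : χ.vars_s13 ⊆ S) {w : Val} (hw : sat {w} χ) :
    ∃ Y ⊆ X, sat Y χ ∧ ¬ FullOn S Y ∧ ¬ FullOn S (X \ Y) := by
  set Y := {v ∈ X | S.restrict v = S.restrict w}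
  have hY : S.restrict '' Y = {S.restrict w} := by
    refine subset_antisymm (image_subset_iff.2 fun v hv => hv.2) (singleton_subset_iff.2 ?_)
    obtain ⟨v, hv, hvw⟩ : S.restrict w ∈ S.restrict '' X := hX ▸ mem_univ _
    exact ⟨v, ⟨hv, hvw⟩, hvw⟩
  refine ⟨Y, sep_subset _ _,
    sat_of_restrict_image_eq hχ hvars (by rw [image_singleton, hY]) hw, fun hfull => ?_,
    fun hfull => ?_⟩
  · have : S.restrict (fun p => !w p) ∈ S.restrict '' Y := hfull ▸ mem_univ _
    rw [hY, mem_singleton_iff] at this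
    simpa using congrFun this ⟨q, hq⟩
  · obtain ⟨v, hv, hvw⟩ : S.restrict w ∈ S.restrict '' (X \ Y) := hfull ▸ mem_univ _
    exact hv.2 ⟨hv.1, hvw⟩

theorem eventually_sat_tensor_of_fullOn {ψ₁ ψ₂ : PDCtx 2} {α β : PTForm} (hα : α.isPD)
    (hβ : β.isPD)
    (h₁ : Upgrades ψ₁ α β ∨ Inconsistent ψ₁ β α ∨ Inconsistent ψ₁ α β)
    (h₂ : Inconsistent ψ₁ β α → ¬ Inconsistent ψ₂ β α) :
    ∀ᶠ S in atTop, ∀ X : Team, FullOn S X → sat X (ψ₁.subst ![α, β]) →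
      sat X ((ψ₁.tensor ψ₂).subst fun _ => theta S) := by
  rcases h₁ with hup | hinc | hinc
  · filter_upwards [hup] with S hS X _ hX
    exact sat_tensor_iff.2 ⟨X, ∅, (union_empty X).symm, hS X hX,
      sat_empty (isPD_subst (fun _ => isPD_theta S) ψ₂)⟩
  · have hχ : (ψ₂.subst ![β, α]).isPD := isPD_subst (Fin.forall_fin_two.2 ⟨hβ, hα⟩) ψ₂
    obtain ⟨W, hW, w, hw⟩ : ∃ W : Team, sat W (ψ₂.subst ![β, α]) ∧ W.Nonempty := by
      by_contra! hW
      exact h₂ hinc hW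
    filter_upwards [eventually_ge_atTop (insert 0 (ψ₂.subst ![β, α]).vars_s13)] with S hS X hX hX₁
    obtain ⟨Y, hYX, hY, hYfull, hXYfull⟩ := exists_subteam_sat_of_fullOn hX
      (hS (Finset.mem_insert_self _ _)) hχ ((Finset.subset_insert _ _).trans hS)
      (sat_of_subset hχ (singleton_subset_iff.2 hw) hW)
    exact sat_tensor_iff.2 ⟨X \ Y, Y, (sdiff_union_of_subset hYX).symm,
      sat_subst_theta_of_not_fullOn ψ₁ hXYfull (sat_of_subset
        (isPD_subst (Fin.forall_fin_two.2 ⟨hα, hβ⟩) ψ₁) sdiff_subset hX₁),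
      sat_subst_theta_of_not_fullOn ψ₂ hYfull hY⟩
  · exact .of_forall fun S X hX hX₁ => absurd (hinc X hX₁) hX.nonempty.ne_empty

theorem upgrades_tensor {ψ₁ ψ₂ : PDCtx 2} {α β : PTForm} (hα : α.isPD) (hβ : β.isPD)
    (h₁ : Upgrades ψ₁ α β ∨ Inconsistent ψ₁ β α ∨ Inconsistent ψ₁ α β)
    (h₂ : Upgrades ψ₂ α β ∨ Inconsistent ψ₂ β α ∨ Inconsistent ψ₂ α β)
    (h : ¬ (Inconsistent ψ₁ β α ∧ Inconsistent ψ₂ β α)) :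
    Upgrades (ψ₁.tensor ψ₂) α β := by
  have hPD : ∀ i, (![α, β] i).isPD := Fin.forall_fin_two.2 ⟨hα, hβ⟩
  filter_upwards [eventually_sat_tensor_of_fullOn hα hβ h₁ fun h₁ h₂ => h ⟨h₁, h₂⟩,
    eventually_sat_tensor_of_fullOn hα hβ h₂ fun h₂ h₁ => h ⟨h₁, h₂⟩,
    eventually_ge_atTop ((ψ₁.subst ![α, β]).vars_s13 ∪ (ψ₂.subst ![α, β]).vars_s13)]
    with S hS₁ hS₂ hvars X hX
  obtain ⟨Y, Z, rfl, hY, hZ⟩ := sat_tensor_iff.1 hX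
  by_cases hYfull : FullOn S Y
  · exact hS₁ _ (hYfull.mono subset_union_left) (sat_of_fullOn_of_subset (isPD_subst hPD ψ₁)
      (Finset.subset_union_left.trans hvars) subset_union_left hYfull hY)
  by_cases hZfull : FullOn S Z
  · exact sat_tensor_comm <| hS₂ _ (hZfull.mono subset_union_right) (sat_of_fullOn_of_subset
      (isPD_subst hPD ψ₂) (Finset.subset_union_right.trans hvars) subset_union_right hZfull hZ)
  exact sat_tensor_iff.2 ⟨Y, Z, rfl, sat_subst_theta_of_not_fullOn ψ₁ hYfull hY,
    sat_subst_theta_of_not_fullOn ψ₂ hZfull hZ⟩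

theorem upgrades_or_inconsistent :
    ∀ ψ : PDCtx 2, (Upgrades ψ top .bot ∧ Upgrades ψ .bot top) ∨
      Inconsistent ψ .bot top ∨ Inconsistent ψ top .bot
  | .ph 0 => .inr (.inl fun _ h => h)
  | .ph 1 => .inr (.inr fun _ h => h)
  | .pos _ | .neg _ | .bot | .dep _ _ => .inl ⟨.of_forall fun _ _ h => h, .of_forall fun _ _ h => h⟩
  | .conj ψ₁ ψ₂ => by
    rcases upgrades_or_inconsistent ψ₁ with ⟨hup₁, hup₁'⟩ | hinc | hinc
    · rcases upgrades_or_inconsistent ψ₂ with ⟨hup₂, hup₂'⟩ | hinc | hinc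
      · exact .inl ⟨hup₁.conj hup₂, hup₁'.conj hup₂'⟩
      · exact .inr (.inl fun X hX => hinc X hX.2)
      · exact .inr (.inr fun X hX => hinc X hX.2)
    · exact .inr (.inl fun X hX => hinc X hX.1)
    · exact .inr (.inr fun X hX => hinc X hX.1)
  | .tensor ψ₁ ψ₂ => by
    have h₁ := upgrades_or_inconsistent ψ₁
    have h₂ := upgrades_or_inconsistent ψ₂
    by_cases hBT : Inconsistent ψ₁ .bot top ∧ Inconsistent ψ₂ .bot top
    · exact .inr (.inl (hBT.1.tensor hBT.2))
    by_cases hTB : Inconsistent ψ₁ top .bot ∧ Inconsistent ψ₂ top .bot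
    · exact .inr (.inr (hTB.1.tensor hTB.2))
    exact .inl ⟨upgrades_tensor isPD_top trivial (h₁.imp_left And.left) (h₂.imp_left And.left) hBT,
      upgrades_tensor trivial isPD_top (h₁.imp And.right Or.symm) (h₂.imp And.right Or.symm) hTB⟩

/-- Intuitionistic disjunction is not uniformly definable in PD: no PD context
    φ[r₁,r₂] satisfies φ[θ₁,θ₂] ≡ θ₁ ∨ θ₂ for all PD-formulas θ₁, θ₂. -/
theorem idis_not_uniformly_definable :
    ¬ ∃ φ : PDCtx 2, ∀ θ₁ θ₂ : PTForm, θ₁.isPD → θ₂.isPD →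
      ∀ X : Team, PTForm.sat X (φ.subst ![θ₁, θ₂]) ↔ PTForm.sat X (.idis θ₁ θ₂) := by
  rintro ⟨φ, hφ⟩
  have hTB : sat univ (φ.subst ![top, .bot]) :=
    (hφ top .bot isPD_top trivial univ).2 (.inl (sat_top univ))
  have hBT : sat univ (φ.subst ![.bot, top]) :=
    (hφ .bot top trivial isPD_top univ).2 (.inr (sat_top univ))
  rcases upgrades_or_inconsistent φ with ⟨hup, -⟩ | hinc | hinc
  · obtain ⟨S, hS⟩ := hup.exists
    have hΘ : (fun _ => theta S) = ![theta S, theta S] := by ext i; fin_cases i <;> rfl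
    have hΘΘ := (hφ _ _ (isPD_theta S) (isPD_theta S) univ).1 (hΘ ▸ hS univ hTB)
    exact sat_theta_iff.1 (hΘΘ.elim id id) (fullOn_univ S)
  · exact univ_nonempty.ne_empty (hinc univ hBT)
  · exact univ_nonempty.ne_empty (hinc univ hTB)
end

section
/- The dependence atom is uniformly definable in inquisitive logic: for all propositional variables p₁,…,pₖ,q, the dependence atom =(p₁,…,pₖ,q) is equivalent under team semantics to the InqL-formula (p₁∨¬p₁)∧⋯∧(pₖ∨¬pₖ) → (q∨¬q), where ¬φ abbreviates φ→⊥, ∨ is intuitionistic disjunction and → is intuitionistic (team) implication. -/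
/-- The InqL formula p ∨ ¬p, where ¬φ := φ → ⊥. -/
def excl (p : ℕ) : PTForm := .idis (.pos p) (.impl (.pos p) .bot)

/-- The conjunction (p₁∨¬p₁)∧⋯∧(pₖ∨¬pₖ) (⊥→⊥, i.e. ⊤, when k = 0). -/
def exclConj : List ℕ → PTForm
  | [] => .impl .bot .bot
  | [p] => excl p
  | p :: q :: ps => .conj (excl p) (exclConj (q :: ps))

lemma excl_sat (p : ℕ) (Y : Team) :
    PTForm.sat Y (excl p) ↔ ((∀ v ∈ Y, v p = true) ∨ (∀ v ∈ Y, v p = false)) := by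
  constructor
  · rintro (h | h)
    · exact Or.inl h
    · refine Or.inr fun v hv => ?_
      by_contra hc
      have hvp : v p = true := by
        cases hq : v p with
        | true => rfl
        | false => exact absurd hq hc
      have : ({v} : Team) = ∅ := h {v} (by simpa using hv)
        (fun w hw => by rw [Set.mem_singleton_iff] at hw; rw [hw]; exact hvp)
      simp at this
  · rintro (h | h)
    · exact Or.inl h
    · refine Or.inr fun Z hZ hZp => ?_
      ext v
      simp only [Set.mem_empty_iff_false, iff_false]
      intro hv
      have h1 := hZp v hv
      have h2 := h v (hZ hv)
      simp [h1] at h2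

lemma exclConj_sat (ps : List ℕ) (Y : Team) :
    PTForm.sat Y (exclConj ps) ↔ ∀ p ∈ ps, PTForm.sat Y (excl p) := by
  match ps with
  | [] => simp [exclConj, PTForm.sat]
  | [p] => simp [exclConj]
  | p :: q :: ps =>
      simp only [exclConj, PTForm.sat, exclConj_sat (q :: ps)]
      constructor
      · rintro ⟨h1, h2⟩ r hr
        rcases List.mem_cons.1 hr with rfl | hr
        · exact h1
        · exact h2 r hr
      · intro h
        exact ⟨h p (by simp), fun r hr => h r (List.mem_cons_of_mem _ hr)⟩

/-- The dependence atom is uniformly definable in inquisitive logic: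
    =(p₁,…,pₖ,q) ≡ (p₁∨¬p₁)∧⋯∧(pₖ∨¬pₖ) → (q∨¬q). -/
theorem dep_definable_in_inql (ps : List ℕ) (q : ℕ) (X : Team) :
    PTForm.sat X (.dep ps q) ↔ PTForm.sat X (.impl (exclConj ps) (excl q)) := by
  constructor
  · intro h Y hYX hY
    rw [exclConj_sat] at hY
    rw [excl_sat]
    rcases Set.eq_empty_or_nonempty Y with rfl | ⟨v, hv⟩
    · exact Or.inl (by simp)
    have key : ∀ w ∈ Y, w q = v q := by
      intro w hw
      refine h w (hYX hw) v (hYX hv) fun p hp => ?_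
      rcases (excl_sat p Y).1 (hY p hp) with hc | hc
      · rw [hc w hw, hc v hv]
      · rw [hc w hw, hc v hv]
    cases hvq : v q with
    | true => exact Or.inl fun w hw => (key w hw).trans hvq
    | false => exact Or.inr fun w hw => (key w hw).trans hvq
  · intro h v hv w hw hagree
    have hsub : ({v, w} : Team) ⊆ X := by
      intro u hu; rcases hu with rfl | rfl
      · exact hv
      · exact hw
    have hY : PTForm.sat {v, w} (exclConj ps) := by
      rw [exclConj_sat]
      intro p hp
      rw [excl_sat]
      cases hvp : v p with
      | true =>
          refine Or.inl fun u hu => ?_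
          rcases hu with rfl | rfl
          · exact hvp
          · rw [← hagree p hp]; exact hvp
      | false =>
          refine Or.inr fun u hu => ?_
          rcases hu with rfl | rfl
          · exact hvp
          · rw [← hagree p hp]; exact hvp
    have := (excl_sat q _).1 (h {v, w} hsub hY)
    rcases this with hc | hc
    · rw [hc v (by simp), hc w (by simp)]
    · rw [hc v (by simp), hc w (by simp)]
end

section
/- Elimination of inconsistent subformulas: if φ[r₁,…,rₘ] is a consistent PD context (some substitution instance has a nonempty satisfying team), then there exists a PD context φ′[r₁,…,rₘ] equivalent to φ as a context (φ[θ₁,…,θₘ] ≡ φ′[θ₁,…,θₘ] for all PD-formulas θᵢ) such that no subformula of φ′ is an inconsistent context. -/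
lemma sat_empty_of_isPD (φ : PTForm) (h : φ.isPD) : PTForm.sat ∅ φ := by
  induction φ with
  | pos p => intro v hv; exact absurd hv (Set.notMem_empty v)
  | neg p => intro v hv; exact absurd hv (Set.notMem_empty v)
  | bot => rfl
  | dep ps q => intro v hv; exact absurd hv (Set.notMem_empty v)
  | conj a b iha ihb => exact ⟨iha h.1, ihb h.2⟩
  | tensor a b iha ihb =>
      exact ⟨∅, ∅, by simp, by simp, by simp, iha h.1, ihb h.2⟩
  | idis a b _ _ => exact h.elim
  | impl a b _ _ => exact h.elim

lemma subst_isPD {m : ℕ} (φ : PDCtx m) (θ : Fin m → PTForm)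
    (h : ∀ i, (θ i).isPD) : (φ.subst θ).isPD := by
  induction φ with
  | ph i => exact h i
  | pos p => trivial
  | neg p => trivial
  | bot => trivial
  | dep ps q => trivial
  | conj a b iha ihb => exact ⟨iha, ihb⟩
  | tensor a b iha ihb => exact ⟨iha, ihb⟩

lemma inc_conj_left {m : ℕ} {a b : PDCtx m} (h : CtxInconsistent a) :
    CtxInconsistent (PDCtx.conj a b) :=
  fun θ hθ X hX => h θ hθ X hX.1

lemma inc_conj_right {m : ℕ} {a b : PDCtx m} (h : CtxInconsistent b) :
    CtxInconsistent (PDCtx.conj a b) :=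
  fun θ hθ X hX => h θ hθ X hX.2

lemma inc_tensor {m : ℕ} {a b : PDCtx m} (ha : CtxInconsistent a)
    (hb : CtxInconsistent b) : CtxInconsistent (PDCtx.tensor a b) := by
  rintro θ hθ X ⟨Y, Z, hY, hZ, hXYZ, hYs, hZs⟩
  rw [hXYZ, ha θ hθ Y hYs, hb θ hθ Z hZs, Set.empty_union]

lemma tensor_left_inc {m : ℕ} (a b : PDCtx m) (h : CtxInconsistent a)
    (θ : Fin m → PTForm) (hθ : ∀ i, (θ i).isPD) (X : Team) :
    PTForm.sat X ((PDCtx.tensor a b).subst θ) ↔ PTForm.sat X (b.subst θ) := by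
  constructor
  · rintro ⟨Y, Z, hY, hZ, hXYZ, hYs, hZs⟩
    have hY0 : Y = ∅ := h θ hθ Y hYs
    obtain rfl : X = Z := by rw [hXYZ, hY0, Set.empty_union]
    exact hZs
  · intro hs
    exact ⟨∅, X, Set.empty_subset X, subset_rfl, (Set.empty_union X).symm,
      sat_empty_of_isPD _ (subst_isPD a θ hθ), hs⟩

lemma tensor_right_inc {m : ℕ} (a b : PDCtx m) (h : CtxInconsistent b)
    (θ : Fin m → PTForm) (hθ : ∀ i, (θ i).isPD) (X : Team) :
    PTForm.sat X ((PDCtx.tensor a b).subst θ) ↔ PTForm.sat X (a.subst θ) := by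
  constructor
  · rintro ⟨Y, Z, hY, hZ, hXYZ, hYs, hZs⟩
    have hZ0 : Z = ∅ := h θ hθ Z hZs
    obtain rfl : X = Y := by rw [hXYZ, hZ0, Set.union_empty]
    exact hYs
  · intro hs
    exact ⟨X, ∅, subset_rfl, Set.empty_subset X, (Set.union_empty X).symm,
      hs, sat_empty_of_isPD _ (subst_isPD b θ hθ)⟩

lemma cons_transfer {m : ℕ} {a b : PDCtx m}
    (heq : ∀ θ : Fin m → PTForm, (∀ i, (θ i).isPD) → ∀ X : Team,
        PTForm.sat X (a.subst θ) ↔ PTForm.sat X (b.subst θ))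
    (h : ¬ CtxInconsistent a) : ¬ CtxInconsistent b :=
  fun hb => h (fun θ hθ X hX => hb θ hθ X ((heq θ hθ X).mp hX))

/-- Elimination of inconsistent subformulas: every consistent PD context is
    equivalent, as a context, to one none of whose subformulas is an
    inconsistent context. -/
theorem eliminate_inconsistent_subformulas {m : ℕ} (φ : PDCtx m)
    (hcons : ¬ CtxInconsistent φ) :
    ∃ φ' : PDCtx m,
      (∀ θ : Fin m → PTForm, (∀ i, (θ i).isPD) → ∀ X : Team,
          PTForm.sat X (φ.subst θ) ↔ PTForm.sat X (φ'.subst θ)) ∧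
      (∀ x (ψ : PDCtx m), φ'.subAt x = some ψ → ¬ CtxInconsistent ψ) := by
  induction φ with
  | ph i =>
      refine ⟨.ph i, fun _ _ _ => Iff.rfl, ?_⟩
      intro x ψ h
      cases x with
      | nil => simp only [PDCtx.subAt] at h; cases h; exact hcons
      | cons b y => simp [PDCtx.subAt] at h
  | pos p =>
      refine ⟨.pos p, fun _ _ _ => Iff.rfl, ?_⟩
      intro x ψ h
      cases x with
      | nil => simp only [PDCtx.subAt] at h; cases h; exact hcons
      | cons b y => simp [PDCtx.subAt] at h
  | neg p =>
      refine ⟨.neg p, fun _ _ _ => Iff.rfl, ?_⟩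
      intro x ψ h
      cases x with
      | nil => simp only [PDCtx.subAt] at h; cases h; exact hcons
      | cons b y => simp [PDCtx.subAt] at h
  | bot =>
      refine ⟨.bot, fun _ _ _ => Iff.rfl, ?_⟩
      intro x ψ h
      cases x with
      | nil => simp only [PDCtx.subAt] at h; cases h; exact hcons
      | cons b y => simp [PDCtx.subAt] at h
  | dep ps q =>
      refine ⟨.dep ps q, fun _ _ _ => Iff.rfl, ?_⟩
      intro x ψ h
      cases x with
      | nil => simp only [PDCtx.subAt] at h; cases h; exact hcons
      | cons b y => simp [PDCtx.subAt] at h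
  | conj a b iha ihb =>
      have ha : ¬ CtxInconsistent a := fun h => hcons (inc_conj_left h)
      have hb : ¬ CtxInconsistent b := fun h => hcons (inc_conj_right h)
      obtain ⟨a', haeq, hasub⟩ := iha ha
      obtain ⟨b', hbeq, hbsub⟩ := ihb hb
      have heq : ∀ θ : Fin m → PTForm, (∀ i, (θ i).isPD) → ∀ X : Team,
          PTForm.sat X ((PDCtx.conj a b).subst θ) ↔
          PTForm.sat X ((PDCtx.conj a' b').subst θ) := by
        intro θ hθ X
        exact and_congr (haeq θ hθ X) (hbeq θ hθ X)
      refine ⟨.conj a' b', heq, ?_⟩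
      intro x ψ h
      match x with
      | [] =>
          simp only [PDCtx.subAt] at h; cases h
          exact cons_transfer heq hcons
      | false :: y => exact hasub y ψ h
      | true :: y => exact hbsub y ψ h
  | tensor a b iha ihb =>
      by_cases ha : CtxInconsistent a
      · have hb : ¬ CtxInconsistent b := fun hb => hcons (inc_tensor ha hb)
        obtain ⟨b', hbeq, hbsub⟩ := ihb hb
        refine ⟨b', ?_, hbsub⟩
        intro θ hθ X
        exact (tensor_left_inc a b ha θ hθ X).trans (hbeq θ hθ X)
      · by_cases hb : CtxInconsistent b
        · obtain ⟨a', haeq, hasub⟩ := iha ha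
          refine ⟨a', ?_, hasub⟩
          intro θ hθ X
          exact (tensor_right_inc a b hb θ hθ X).trans (haeq θ hθ X)
        · obtain ⟨a', haeq, hasub⟩ := iha ha
          obtain ⟨b', hbeq, hbsub⟩ := ihb hb
          have heq : ∀ θ : Fin m → PTForm, (∀ i, (θ i).isPD) → ∀ X : Team,
              PTForm.sat X ((PDCtx.tensor a b).subst θ) ↔
              PTForm.sat X ((PDCtx.tensor a' b').subst θ) := by
            intro θ hθ X
            constructor
            · rintro ⟨Y, Z, hY, hZ, hXYZ, hYs, hZs⟩
              exact ⟨Y, Z, hY, hZ, hXYZ, (haeq θ hθ Y).mp hYs, (hbeq θ hθ Z).mp hZs⟩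
            · rintro ⟨Y, Z, hY, hZ, hXYZ, hYs, hZs⟩
              exact ⟨Y, Z, hY, hZ, hXYZ, (haeq θ hθ Y).mpr hYs, (hbeq θ hθ Z).mpr hZs⟩
          refine ⟨.tensor a' b', heq, ?_⟩
          intro x ψ h
          match x with
          | [] =>
              simp only [PDCtx.subAt] at h; cases h
              exact cons_transfer heq hcons
          | false :: y => exact hasub y ψ h
          | true :: y => exact hbsub y ψ h
end
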